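/- Fix β > 1. For every n ≥ 2, the number of admissible words of length n which are not full is at most the number of admissible words of length n−1: #Σ_n(β) − #Ξ_n(β) ≤ #Σ_{n−1}(β). -/

import Mathlib

open MeasureTheory Set
open scoped Classical

/-- The beta-transformation `T_β x = βx - ⌊βx⌋`. -/
noncomputable def betaT (β x : ℝ) : ℝ := Int.fract (β * x)

/-- The `k`-th digit (0-indexed) of the β-expansion of `x`: `ε_{k+1}(x,β) = ⌊β T_β^k x⌋`. -/
noncomputable def betaDigit (β x : ℝ) (k : ℕ) : ℕ := ⌊β * (betaT β)^[k] x⌋₊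

/-- `Σ_n(β)`: admissible words of length `n`, i.e. prefixes of β-expansions of points of `[0,1)`. -/
def admWords (β : ℝ) (n : ℕ) : Set (Fin n → ℕ) :=
  {w | ∃ x ∈ Set.Ico (0:ℝ) 1, ∀ i : Fin n, w i = betaDigit β x i}

/-- The cylinder `𝔍(w)` of points of `[0,1)` whose β-expansion starts with `w`. -/
def cyl (β : ℝ) {n : ℕ} (w : Fin n → ℕ) : Set ℝ :=
  {x | x ∈ Set.Ico (0:ℝ) 1 ∧ ∀ i : Fin n, betaDigit β x i = w i}

/-- `Ξ_n(β)`: admissible words of length `n` whose cylinder is full (of length `β^{-n}`). -/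
def fullWords (β : ℝ) (n : ℕ) : Set (Fin n → ℕ) :=
  {w | w ∈ admWords β n ∧ volume (cyl β w) = ENNReal.ofReal (1 / β ^ n)}

/-- `ε(β)`: the β-expansion of 1 (0-indexed). -/
noncomputable def eps1 (β : ℝ) (k : ℕ) : ℕ := betaDigit β 1 k

/-- `ε*(β)`: the infinite β-expansion of 1.  If `ε(β)` has a last nonzero digit at
(0-indexed) position `N`, it is the periodic sequence `(ε_0 ⋯ ε_{N-1} (ε_N - 1))^∞`;
otherwise it is `ε(β)` itself. -/

noncomputable def epsStar (β : ℝ) : ℕ → ℕ :=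
  if h : ∃ N, eps1 β N ≠ 0 ∧ ∀ k, N < k → eps1 β k = 0 then
    fun k => if k % (h.choose + 1) = h.choose then eps1 β h.choose - 1
             else eps1 β (k % (h.choose + 1))
  else eps1 β

/-- Strict lexicographic order on sequences of nonnegative integers. -/
def lexLt (a b : ℕ → ℕ) : Prop := ∃ i, (∀ j, j < i → a j = b j) ∧ a i < b i

/-- Strict lexicographic order on words of length `n`. -/
def wordLt {n : ℕ} (a b : Fin n → ℕ) : Prop :=
  ∃ i : Fin n, (∀ j, j < i → a j = b j) ∧ a i < b i

/-- `Ω_n(x)`: all length-`n` prefixes of β-expansions of `x` over all bases `β > 1`. -/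
def prefWords (x : ℝ) (n : ℕ) : Set (Fin n → ℕ) :=
  {w | ∃ β : ℝ, 1 < β ∧ ∀ i : Fin n, w i = betaDigit β x i}

/-- The parameter cylinder `I(w) = {β > 1 : ε_1(x,β)⋯ε_n(x,β) = w}`. -/
def pcyl (x : ℝ) {n : ℕ} (w : Fin n → ℕ) : Set ℝ :=
  {β | 1 < β ∧ ∀ i : Fin n, betaDigit β x i = w i}

/-- `Λ_n(x)`: words whose parameter cylinder is full, i.e. `{T_β^n x : β ∈ I(w)} = [0,1)`. -/
def pfull (x : ℝ) (n : ℕ) : Set (Fin n → ℕ) :=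
  {w | w ∈ prefWords x n ∧ (fun β => (betaT β)^[n] x) '' pcyl x w = Set.Ico (0:ℝ) 1}

/-!
If `u a` is admissible and `a' < a`, the cylinder of `u a'` is full. Indeed, a point `x` of the
cylinder of `u a` satisfies `β T_β^{n-1} x ≥ a ≥ a' + 1`, and every smaller value of `T_β^{n-1}` is
attained on the cylinder of `u`; hence `T_β^n` maps the cylinder of `u a'` onto `[0, 1)`. Since
`x = ∑ εᵢ β^{-i} + β^{-n} T_β^n x`, that cylinder is then an interval of length `β^{-n}`.
So a word that is not full has the largest last digit among the admissible extensions of its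
prefix, and dropping the last digit is injective on non-full words.
-/

/-- The left endpoint of the cylinder of `w`. -/
noncomputable def wordValue (β : ℝ) {n : ℕ} (w : Fin n → ℕ) : ℝ :=
  ∑ i, (w i : ℝ) / β ^ ((i : ℕ) + 1)

section
variable {β : ℝ}

lemma betaT_mem_Ico (x : ℝ) : betaT β x ∈ Ico (0 : ℝ) 1 :=
  ⟨Int.fract_nonneg _, Int.fract_lt_one _⟩

lemma iterate_betaT_mem_Ico {x : ℝ} (hx : x ∈ Ico (0 : ℝ) 1) :
    ∀ n, (betaT β)^[n] x ∈ Ico (0 : ℝ) 1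
  | 0 => hx
  | n + 1 => by rw [Function.iterate_succ_apply']; exact betaT_mem_Ico _

lemma betaT_eq_sub_floor (hβ : 0 ≤ β) {y : ℝ} (hy : 0 ≤ y) :
    betaT β y = β * y - ⌊β * y⌋₊ := by
  rw [betaT, Int.fract, natCast_floor_eq_intCast_floor (mul_nonneg hβ hy)]

lemma floor_mul_eq_and_betaT_eq {y t : ℝ} {d : ℕ} (ht : t ∈ Ico (0 : ℝ) 1)
    (h : β * y = d + t) : ⌊β * y⌋₊ = d ∧ betaT β y = t := by
  refine ⟨?_, ?_⟩
  · rw [h, add_comm, Nat.floor_add_natCast ht.1, Nat.floor_eq_zero.2 ht.2, zero_add]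
  · rw [betaT, h, Int.fract_natCast_add, Int.fract_eq_self.2 ht]

lemma betaDigit_succ (x : ℝ) (k : ℕ) :
    betaDigit β x (k + 1) = betaDigit β (betaT β x) k := by
  rw [betaDigit, betaDigit, Function.iterate_succ_apply]

lemma iterate_succ_betaT (hβ : 0 ≤ β) {x : ℝ} (hx : x ∈ Ico (0 : ℝ) 1) (n : ℕ) :
    (betaT β)^[n + 1] x = β * (betaT β)^[n] x - betaDigit β x n := by
  rw [Function.iterate_succ_apply']
  exact betaT_eq_sub_floor hβ (iterate_betaT_mem_Ico hx n).1

lemma eq_wordValue_add_iterate (hβ : 0 < β) {x : ℝ} (hx : x ∈ Ico (0 : ℝ) 1) (n : ℕ) :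
    x = wordValue β (fun i : Fin n => betaDigit β x i) + (betaT β)^[n] x / β ^ n := by
  induction n with
  | zero => simp [wordValue]
  | succ n ih =>
    have hsplit : (betaT β)^[n] x / β ^ n =
        betaDigit β x n / β ^ (n + 1) + (β * (betaT β)^[n] x - betaDigit β x n) / β ^ (n + 1) := by
      field_simp
      ring
    rw [wordValue, Fin.sum_univ_castSucc, iterate_succ_betaT hβ.le hx]
    simp only [Fin.val_castSucc, Fin.val_last]
    rw [wordValue] at ih
    linarith

lemma exists_iterate_eq_of_le (hβ : 0 < β) (n : ℕ) {x s : ℝ} (hx : x ∈ Ico (0 : ℝ) 1)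
    (hs : 0 ≤ s) (hsx : s ≤ (betaT β)^[n] x) :
    ∃ z ∈ Ico (0 : ℝ) 1, z ≤ x ∧ (∀ k < n, betaDigit β z k = betaDigit β x k) ∧
      (betaT β)^[n] z = s := by
  -- `z ≤ x` is carried along only to keep the constructed point in `[0, 1)`.
  induction n generalizing x with
  | zero => exact ⟨s, ⟨hs, hsx.trans_lt hx.2⟩, hsx, fun k hk => absurd hk k.not_lt_zero, rfl⟩
  | succ n ih =>
    rw [Function.iterate_succ_apply] at hsx
    obtain ⟨z₁, hz₁, hz₁x, hdig, hz₁s⟩ := ih (betaT_mem_Ico x) hsx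
    set d := betaDigit β x 0
    have hTx : betaT β x = β * x - d := betaT_eq_sub_floor hβ.le hx.1
    obtain ⟨hd, hT⟩ := floor_mul_eq_and_betaT_eq (β := β) (y := (d + z₁) / β) hz₁ (by field_simp)
    have hzx : (d + z₁) / β ≤ x := by rw [div_le_iff₀ hβ]; linarith
    refine ⟨(d + z₁) / β, ⟨by have := hz₁.1; positivity, hzx.trans_lt hx.2⟩, hzx, ?_, ?_⟩
    · rintro (_ | k) hk
      · exact hd
      · rw [betaDigit_succ, betaDigit_succ, hT]
        exact hdig k (by omega)
    · rw [Function.iterate_succ_apply, hT, hz₁s]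

lemma cyl_subset_Ico (hβ : 0 < β) {n : ℕ} (w : Fin n → ℕ) :
    cyl β w ⊆ Ico (wordValue β w) (wordValue β w + 1 / β ^ n) := by
  rintro x ⟨hx, hxw⟩
  have hexp := eq_wordValue_add_iterate hβ hx n
  simp only [hxw] at hexp
  have hT := iterate_betaT_mem_Ico (β := β) hx n
  have hpow := pow_pos hβ n
  rw [hexp]
  exact ⟨le_add_of_nonneg_right (div_nonneg hT.1 hpow.le),
    add_lt_add_right (div_lt_div_of_pos_right hT.2 hpow) _⟩

lemma Ico_subset_cyl (hβ : 0 < β) {n : ℕ} {w : Fin n → ℕ}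
    (h : ∀ t ∈ Ico (0 : ℝ) 1, ∃ z ∈ cyl β w, (betaT β)^[n] z = t) :
    Ico (wordValue β w) (wordValue β w + 1 / β ^ n) ⊆ cyl β w := by
  rintro y ⟨h₁, h₂⟩
  have hpow := pow_pos hβ n
  obtain ⟨z, hz, hzt⟩ := h ((y - wordValue β w) * β ^ n)
    ⟨by nlinarith, by rwa [← lt_div_iff₀ hpow, sub_lt_iff_lt_add']⟩
  convert hz
  have hexp := eq_wordValue_add_iterate hβ hz.1 n
  simp only [hz.2, hzt] at hexp
  rw [hexp]
  field_simp
  ring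

lemma mem_fullWords_of_forall_exists_iterate_eq (hβ : 0 < β) {n : ℕ} {w : Fin n → ℕ}
    (h : ∀ t ∈ Ico (0 : ℝ) 1, ∃ z ∈ cyl β w, (betaT β)^[n] z = t) :
    w ∈ fullWords β n := by
  obtain ⟨z, hz, -⟩ := h 0 ⟨le_rfl, one_pos⟩
  refine ⟨⟨z, hz.1, fun i => (hz.2 i).symm⟩, ?_⟩
  rw [(cyl_subset_Ico hβ w).antisymm (Ico_subset_cyl hβ h), Real.volume_Ico,
    add_sub_cancel_left]

lemma snoc_mem_fullWords_of_lt (hβ : 0 < β) {m : ℕ} {u : Fin m → ℕ} {a a' : ℕ}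
    (hadm : (Fin.snoc u a : Fin (m + 1) → ℕ) ∈ admWords β (m + 1)) (ha : a' < a) :
    (Fin.snoc u a' : Fin (m + 1) → ℕ) ∈ fullWords β (m + 1) := by
  obtain ⟨x, hx, hxw⟩ := hadm
  have hu : ∀ i : Fin m, betaDigit β x i = u i := fun i => by simpa using (hxw i.castSucc).symm
  have hax : a ≤ ⌊β * (betaT β)^[m] x⌋₊ := by simpa [betaDigit] using (hxw (Fin.last m)).le
  rw [Nat.le_floor_iff (mul_nonneg hβ.le (iterate_betaT_mem_Ico hx m).1)] at hax
  refine mem_fullWords_of_forall_exists_iterate_eq hβ fun t ht => ?_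
  have hle : (a' + t) / β ≤ (betaT β)^[m] x := by
    rw [div_le_iff₀ hβ]
    have : (a' : ℝ) + 1 ≤ a := by exact_mod_cast ha
    linarith [ht.2]
  obtain ⟨z, hz, -, hdig, hzs⟩ :=
    exists_iterate_eq_of_le hβ m hx (by have := ht.1; positivity) hle
  obtain ⟨hd, hT⟩ := floor_mul_eq_and_betaT_eq (β := β) (y := (betaT β)^[m] z) ht
    (by rw [hzs]; field_simp)
  refine ⟨z, ⟨hz, fun i => ?_⟩, by rwa [Function.iterate_succ_apply']⟩
  induction i using Fin.lastCases with
  | last => simpa [betaDigit] using hd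
  | cast i => simpa [hdig i i.isLt] using hu i

lemma admWords_finite (hβ : 0 ≤ β) (n : ℕ) : (admWords β n).Finite := by
  refine (Set.finite_Icc (0 : Fin n → ℕ) fun _ => ⌊β⌋₊).subset ?_
  rintro w ⟨x, hx, hxw⟩
  refine ⟨fun i => Nat.zero_le _, fun i => ?_⟩
  rw [hxw i]
  exact Nat.floor_le_floor (mul_le_of_le_one_right hβ (iterate_betaT_mem_Ico hx i).2.le)

lemma last_le_of_notMem_fullWords (hβ : 0 < β) {m : ℕ} {w w' : Fin (m + 1) → ℕ}
    (hw : w ∉ fullWords β (m + 1)) (hw' : w' ∈ admWords β (m + 1))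
    (hinit : Fin.init w = Fin.init w') : w' (Fin.last m) ≤ w (Fin.last m) := by
  by_contra! hlt
  rw [← Fin.snoc_init_self w', ← hinit] at hw'
  rw [← Fin.snoc_init_self w] at hw
  exact hw (snoc_mem_fullWords_of_lt hβ hw' hlt)

lemma ncard_admWords_sdiff_fullWords_le (hβ : 0 < β) (m : ℕ) :
    (admWords β (m + 1) \ fullWords β (m + 1)).ncard ≤ (admWords β m).ncard := by
  refine Set.ncard_le_ncard_of_injOn Fin.init ?_ ?_ (admWords_finite hβ.le m)
  · rintro w ⟨⟨x, hx, hxw⟩, -⟩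
    exact ⟨x, hx, fun i => hxw i.castSucc⟩
  · intro w hw w' hw' hinit
    have hlast := (last_le_of_notMem_fullWords hβ hw'.2 hw.1 hinit.symm).antisymm
      (last_le_of_notMem_fullWords hβ hw.2 hw'.1 hinit)
    rw [← Fin.snoc_init_self w, ← Fin.snoc_init_self w', hinit, hlast]

end

theorem nonfull_card_le_general (β : ℝ) (hβ : 1 < β) (n : ℕ) :
    (admWords β n).ncard - (fullWords β n).ncard ≤ (admWords β (n - 1)).ncard := by
  have hβ₀ : 0 < β := zero_lt_one.trans hβ
  cases n with
  | zero => exact Nat.sub_le _ _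
  | succ m =>
    have hfull : fullWords β (m + 1) ⊆ admWords β (m + 1) := fun w hw => hw.1
    rw [← Set.ncard_sdiff hfull ((admWords_finite hβ₀.le _).subset hfull)]
    exact ncard_admWords_sdiff_fullWords_le hβ₀ m

theorem nonfull_card_le (β : ℝ) (hβ : 1 < β) (n : ℕ) (hn : 2 ≤ n) :
    (admWords β n).ncard - (fullWords β n).ncard ≤ (admWords β (n - 1)).ncard :=
  nonfull_card_le_general β hβ n
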